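/- arXiv:2409.08928 — 4 statements merged into one kernel-verified Lean document; each statement's English description precedes it below -/
import Mathlib

section
/- Let d ∈ ℕ, μ ∈ ℝ^d and let V be a d×d real symmetric positive definite matrix. Then for every c ∈ (0, 1/(4‖V‖)] one has ∫_{ℝ^d} e^{c‖x‖²} φ_d(x; μ, V) dx ≤ (2‖V‖)^{d/2} · det(V)^{−1/2} · exp(2c‖μ‖²). -/
/-!
Centre the weighted Gaussian at the solution `m` of `m - 2c V m = μ` rather than at `μ`: completing
the square turns the exponent `c‖x‖² - (x-μ)ᵀV⁻¹(x-μ)/2` into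
`c‖x-m‖² - (x-m)ᵀV⁻¹(x-m)/2 + c⟪m, μ⟫`. Since `V⁻¹ ≥ ‖V‖⁻¹` and `c ≤ 1/(4‖V‖)`, the first two
terms are at most `-‖x-m‖²/(4‖V‖)`, while `‖m‖ ≤ 2‖μ‖` (because `‖2cV‖ ≤ 1/2`) bounds the last one
by `2c‖μ‖²`. Integrating the resulting isotropic Gaussian gives `(4π‖V‖)^{d/2}`, which together
with the normalisation of `φ_d` is the claimed constant.
-/

open MeasureTheory Matrix

/-- The Euclidean norm on `ℝ^n`. -/
noncomputable def euclNorm {n : ℕ} (x : Fin n → ℝ) : ℝ := Real.sqrt (∑ i, (x i) ^ 2)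

/-- The density of the `n`-dimensional Gaussian distribution with mean `m` and
(symmetric positive definite) covariance matrix `V`, with respect to Lebesgue measure. -/
noncomputable def gaussDensity {n : ℕ} (m : Fin n → ℝ) (V : Matrix (Fin n) (Fin n) ℝ)
    (x : Fin n → ℝ) : ℝ :=
  ((2 * Real.pi) ^ n * V.det) ^ (-(1 : ℝ) / 2) *
    Real.exp (-((x - m) ⬝ᵥ (V⁻¹ *ᵥ (x - m))) / 2)

/-- The operator (spectral) norm of a matrix, viewed as a linear map between
Euclidean spaces. -/
noncomputable def matOpNorm {n : ℕ} (V : Matrix (Fin n) (Fin n) ℝ) : ℝ :=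
  ‖Matrix.toEuclideanCLM (𝕜 := ℝ) V‖

open Real

section QuadraticForm

variable {ι : Type*} [Fintype ι] {V : Matrix ι ι ℝ}

lemma Matrix.IsHermitian.dotProduct_mulVec_comm (hV : V.IsHermitian) (x y : ι → ℝ) :
    x ⬝ᵥ (V *ᵥ y) = y ⬝ᵥ (V *ᵥ x) := by
  have hT : Vᵀ = V := by simpa using hV.eq
  conv_lhs => rw [dotProduct_mulVec, ← hT, vecMul_transpose]
  exact dotProduct_comm _ _

variable [DecidableEq ι]

lemma Matrix.PosDef.two_mul_dotProduct_sub_le (hV : V.PosDef) (z w : ι → ℝ) :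
    2 * (z ⬝ᵥ w) - w ⬝ᵥ (V *ᵥ w) ≤ z ⬝ᵥ (V⁻¹ *ᵥ z) := by
  have hVinv : V *ᵥ (V⁻¹ *ᵥ z) = z := by
    rw [mulVec_mulVec, mul_nonsing_inv _ hV.det_pos.ne'.isUnit, one_mulVec]
  have hnonneg := hV.posSemidef.dotProduct_mulVec_nonneg (V⁻¹ *ᵥ z - w)
  rw [star_trivial, mulVec_sub, hVinv, sub_dotProduct, dotProduct_sub, dotProduct_sub,
    hV.isHermitian.dotProduct_mulVec_comm (V⁻¹ *ᵥ z) w, hVinv, dotProduct_comm (V⁻¹ *ᵥ z) z,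
    dotProduct_comm w z] at hnonneg
  linarith

lemma Matrix.IsHermitian.completeSquare_inv_mulVec (hV : V.IsHermitian) (hdet : IsUnit V.det)
    {c : ℝ} {μ m : ι → ℝ} (hm : m - (2 * c) • (V *ᵥ m) = μ) (x : ι → ℝ) :
    c * (x ⬝ᵥ x) - (x - μ) ⬝ᵥ (V⁻¹ *ᵥ (x - μ)) / 2 =
      c * ((x - m) ⬝ᵥ (x - m)) - (x - m) ⬝ᵥ (V⁻¹ *ᵥ (x - m)) / 2 + c * (m ⬝ᵥ μ) := by
  have hinv : V⁻¹ *ᵥ (V *ᵥ m) = m := by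
    rw [mulVec_mulVec, nonsing_inv_mul _ hdet, one_mulVec]
  have hcross : (V *ᵥ m) ⬝ᵥ (V⁻¹ *ᵥ (x - m)) = (x - m) ⬝ᵥ m := by
    rw [hV.inv.dotProduct_mulVec_comm, hinv]
  subst hm
  obtain ⟨z, rfl⟩ : ∃ z, x = z + m := ⟨x - m, by abel⟩
  have hxμ : z + m - (m - (2 * c) • (V *ᵥ m)) = z + (2 * c) • (V *ᵥ m) := by abel
  simp only [add_sub_cancel_right] at hcross ⊢
  rw [hxμ, mulVec_add, mulVec_smul, hinv]
  simp only [add_dotProduct, dotProduct_add, smul_dotProduct, dotProduct_smul, dotProduct_sub,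
    smul_eq_mul, hcross, dotProduct_comm m z, dotProduct_comm (V *ᵥ m) m]
  ring

end QuadraticForm

section EuclideanNorm

variable {n : ℕ}

lemma euclNorm_eq_norm_toLp (x : Fin n → ℝ) : euclNorm x = ‖WithLp.toLp 2 x‖ := by
  simp [euclNorm, EuclideanSpace.norm_eq]

lemma euclNorm_nonneg (x : Fin n → ℝ) : 0 ≤ euclNorm x := sqrt_nonneg _

lemma euclNorm_sq_eq_dotProduct (x : Fin n → ℝ) : euclNorm x ^ 2 = x ⬝ᵥ x := by
  rw [euclNorm, sq_sqrt (Finset.sum_nonneg fun i _ => sq_nonneg _)]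
  simp [dotProduct, sq]

lemma dotProduct_le_euclNorm_mul (x y : Fin n → ℝ) : x ⬝ᵥ y ≤ euclNorm x * euclNorm y := by
  simpa [euclNorm_eq_norm_toLp, EuclideanSpace.inner_eq_star_dotProduct, dotProduct_comm]
    using real_inner_le_norm (WithLp.toLp 2 x) (WithLp.toLp 2 y)

lemma matOpNorm_nonneg (A : Matrix (Fin n) (Fin n) ℝ) : 0 ≤ matOpNorm A := norm_nonneg _

lemma euclNorm_mulVec_le (A : Matrix (Fin n) (Fin n) ℝ) (x : Fin n → ℝ) :
    euclNorm (A *ᵥ x) ≤ matOpNorm A * euclNorm x := by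
  simpa [euclNorm_eq_norm_toLp, matOpNorm]
    using (toEuclideanCLM (𝕜 := ℝ) A).le_opNorm (WithLp.toLp 2 x)

lemma dotProduct_mulVec_le (A : Matrix (Fin n) (Fin n) ℝ) (x : Fin n → ℝ) :
    x ⬝ᵥ (A *ᵥ x) ≤ matOpNorm A * euclNorm x ^ 2 :=
  calc x ⬝ᵥ (A *ᵥ x) ≤ euclNorm x * euclNorm (A *ᵥ x) := dotProduct_le_euclNorm_mul _ _
    _ ≤ euclNorm x * (matOpNorm A * euclNorm x) := by
      gcongr
      · exact euclNorm_nonneg x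
      · exact euclNorm_mulVec_le A x
    _ = matOpNorm A * euclNorm x ^ 2 := by ring

lemma Matrix.PosDef.euclNorm_sq_div_matOpNorm_le {V : Matrix (Fin n) (Fin n) ℝ} (hV : V.PosDef)
    (z : Fin n → ℝ) : euclNorm z ^ 2 / matOpNorm V ≤ z ⬝ᵥ (V⁻¹ *ᵥ z) := by
  rcases (matOpNorm_nonneg V).eq_or_lt with ha | ha
  · rw [← ha, div_zero]
    simpa using hV.inv.posSemidef.dotProduct_mulVec_nonneg z
  set a := matOpNorm V
  have hw := hV.two_mul_dotProduct_sub_le z (a⁻¹ • z)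
  rw [dotProduct_smul, smul_dotProduct, mulVec_smul, dotProduct_smul, smul_eq_mul, smul_eq_mul,
    smul_eq_mul, ← euclNorm_sq_eq_dotProduct] at hw
  calc euclNorm z ^ 2 / a = 2 * (a⁻¹ * euclNorm z ^ 2) - a⁻¹ * (a⁻¹ * (a * euclNorm z ^ 2)) := by
        field_simp; ring
    _ ≤ 2 * (a⁻¹ * euclNorm z ^ 2) - a⁻¹ * (a⁻¹ * (z ⬝ᵥ (V *ᵥ z))) := by
        gcongr
        exact dotProduct_mulVec_le V z
    _ ≤ z ⬝ᵥ (V⁻¹ *ᵥ z) := hw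

lemma euclNorm_le_two_mul_euclNorm_sub_smul_mulVec {A : Matrix (Fin n) (Fin n) ℝ} {t : ℝ}
    (ht : 0 ≤ t) (htA : 2 * t * matOpNorm A ≤ 1) (m : Fin n → ℝ) :
    euclNorm m ≤ 2 * euclNorm (m - t • (A *ᵥ m)) := by
  have htri : euclNorm m ≤ euclNorm (m - t • (A *ᵥ m)) + t * euclNorm (A *ᵥ m) := by
    simpa [euclNorm_eq_norm_toLp, norm_smul, abs_of_nonneg ht] using
      norm_le_norm_sub_add (WithLp.toLp 2 m) (WithLp.toLp 2 (t • (A *ᵥ m)))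
  nlinarith [euclNorm_mulVec_le A m, euclNorm_nonneg m]

lemma exists_sub_smul_mulVec_eq {A : Matrix (Fin n) (Fin n) ℝ} {t : ℝ}
    (ht : 0 ≤ t) (htA : 2 * t * matOpNorm A ≤ 1) (μ : Fin n → ℝ) :
    ∃ m, m - t • (A *ᵥ m) = μ := by
  have hinj : Function.Injective (1 - t • A).mulVecLin := by
    rw [← LinearMap.ker_eq_bot, LinearMap.ker_eq_bot']
    intro m hm
    simp only [mulVecLin_apply, sub_mulVec, one_mulVec, smul_mulVec] at hm
    simpa [hm, euclNorm_eq_norm_toLp] using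
      euclNorm_le_two_mul_euclNorm_sub_smul_mulVec ht htA m
  obtain ⟨m, hm⟩ := LinearMap.injective_iff_surjective.mp hinj μ
  exact ⟨m, by simpa [sub_mulVec, smul_mulVec] using hm⟩

lemma integral_exp_neg_mul_euclNorm_sub_sq {b : ℝ} (hb : 0 < b) (m : Fin n → ℝ) :
    ∫ x, exp (-b * euclNorm (x - m) ^ 2) = (π / b) ^ ((n : ℝ) / 2) := by
  rw [integral_sub_right_eq_self (fun x => exp (-b * euclNorm x ^ 2)) m,
    ← (PiLp.volume_preserving_ofLp (Fin n)).integral_comp'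
      (f := (MeasurableEquiv.toLp 2 (Fin n → ℝ)).symm)]
  simpa [euclNorm_eq_norm_toLp] using
    GaussianFourier.integral_rexp_neg_mul_sq_norm (V := EuclideanSpace ℝ (Fin n)) hb

lemma integrable_exp_neg_mul_euclNorm_sub_sq {b : ℝ} (hb : 0 < b) (m : Fin n → ℝ) :
    Integrable fun x => exp (-b * euclNorm (x - m) ^ 2) :=
  .of_integral_ne_zero <| by
    rw [integral_exp_neg_mul_euclNorm_sub_sq hb]
    exact (rpow_pos_of_pos (div_pos pi_pos hb) _).ne'

end EuclideanNorm

lemma two_pi_pow_mul_rpow_neg_half_mul_rpow_half {a D : ℝ} (ha : 0 < a) (hD : 0 < D) (n : ℕ) :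
    ((2 * π) ^ n * D) ^ (-(1 : ℝ) / 2) * (4 * a * π) ^ ((n : ℝ) / 2) =
      (2 * a) ^ ((n : ℝ) / 2) * D ^ (-(1 : ℝ) / 2) := by
  have hπ := pi_pos
  have hcancel : (2 * π) ^ ((n : ℝ) * (-1 / 2)) * (2 * π) ^ ((n : ℝ) / 2) = 1 := by
    rw [← rpow_add (by positivity)]
    ring_nf
    exact rpow_zero _
  rw [show 4 * a * π = 2 * π * (2 * a) by ring, mul_rpow (by positivity) hD.le,
    mul_rpow (by positivity) (by positivity), ← rpow_natCast, ← rpow_mul (by positivity)]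
  linear_combination ((2 * a) ^ ((n : ℝ) / 2) * D ^ (-(1 : ℝ) / 2)) * hcancel

section Gaussian

variable {n : ℕ} {V : Matrix (Fin n) (Fin n) ℝ} {c : ℝ} {μ m : Fin n → ℝ}

lemma mul_euclNorm_sq_sub_half_dotProduct_inv_mulVec_le (hV : V.PosDef)
    (ha : 0 < matOpNorm V) (hc : 0 ≤ c) (hca : 4 * c * matOpNorm V ≤ 1)
    (hm : m - (2 * c) • (V *ᵥ m) = μ) (x : Fin n → ℝ) :
    c * euclNorm x ^ 2 - (x - μ) ⬝ᵥ (V⁻¹ *ᵥ (x - μ)) / 2 ≤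
      2 * c * euclNorm μ ^ 2 - euclNorm (x - m) ^ 2 / (4 * matOpNorm V) := by
  have hmμ : euclNorm m ≤ 2 * euclNorm μ := by
    simpa [hm] using euclNorm_le_two_mul_euclNorm_sub_smul_mulVec (A := V) (t := 2 * c)
      (by positivity) (by linarith) m
  have hcross : c * (m ⬝ᵥ μ) ≤ 2 * c * euclNorm μ ^ 2 :=
    calc c * (m ⬝ᵥ μ) ≤ c * (euclNorm m * euclNorm μ) := by
          gcongr; exact dotProduct_le_euclNorm_mul m μ
      _ ≤ c * (2 * euclNorm μ * euclNorm μ) := by gcongr; exact euclNorm_nonneg μ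
      _ = 2 * c * euclNorm μ ^ 2 := by ring
  have hquad := hV.euclNorm_sq_div_matOpNorm_le (x - m)
  have hcz : c * euclNorm (x - m) ^ 2 ≤ euclNorm (x - m) ^ 2 / (4 * matOpNorm V) := by
    rw [le_div_iff₀ (by positivity)]
    nlinarith [sq_nonneg (euclNorm (x - m))]
  have hquarter : euclNorm (x - m) ^ 2 / (4 * matOpNorm V) =
      euclNorm (x - m) ^ 2 / matOpNorm V / 4 := by ring
  rw [euclNorm_sq_eq_dotProduct, hV.isHermitian.completeSquare_inv_mulVec
    hV.det_pos.ne'.isUnit hm x, ← euclNorm_sq_eq_dotProduct]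
  linarith

lemma gaussDensity_nonneg (hdet : 0 ≤ V.det) (x : Fin n → ℝ) : 0 ≤ gaussDensity μ V x :=
  mul_nonneg (rpow_nonneg (mul_nonneg (by positivity) hdet) _) (exp_nonneg _)

lemma exp_mul_gaussDensity_le (hV : V.PosDef) (ha : 0 < matOpNorm V) (hc : 0 ≤ c)
    (hca : 4 * c * matOpNorm V ≤ 1) (hm : m - (2 * c) • (V *ᵥ m) = μ) (x : Fin n → ℝ) :
    exp (c * euclNorm x ^ 2) * gaussDensity μ V x ≤
      ((2 * π) ^ n * V.det) ^ (-(1 : ℝ) / 2) * exp (2 * c * euclNorm μ ^ 2) *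
        exp (-(4 * matOpNorm V)⁻¹ * euclNorm (x - m) ^ 2) := by
  rw [gaussDensity, mul_left_comm, mul_assoc, ← exp_add, ← exp_add]
  refine mul_le_mul_of_nonneg_left (exp_le_exp.mpr ?_)
    (rpow_nonneg (mul_nonneg (by positivity) hV.det_pos.le) _)
  have := mul_euclNorm_sq_sub_half_dotProduct_inv_mulVec_le hV ha hc hca hm x
  rw [neg_mul, ← div_eq_inv_mul]
  linarith

end Gaussian

theorem stmt1_general (d : ℕ) (μ : Fin d → ℝ) (V : Matrix (Fin d) (Fin d) ℝ)
    (hV : V.PosDef) (c : ℝ) (hc : 0 < c) (hc' : c ≤ 1 / (4 * matOpNorm V)) :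
    ∫ x : Fin d → ℝ, Real.exp (c * euclNorm x ^ 2) * gaussDensity μ V x ≤
      (2 * matOpNorm V) ^ ((d : ℝ) / 2) * V.det ^ (-(1 : ℝ) / 2) *
        Real.exp (2 * c * euclNorm μ ^ 2) := by
  have ha : 0 < matOpNorm V := by
    by_contra h
    rw [le_antisymm (not_lt.mp h) (matOpNorm_nonneg V), mul_zero, div_zero] at hc'
    linarith
  have hca : 4 * c * matOpNorm V ≤ 1 := by
    rw [le_div_iff₀ (by positivity)] at hc'
    linarith
  obtain ⟨m, hm⟩ := exists_sub_smul_mulVec_eq (A := V) (t := 2 * c) (by positivity)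
    (by linarith) μ
  have hb : 0 < (4 * matOpNorm V)⁻¹ := by positivity
  calc _ ≤ ∫ x, ((2 * π) ^ d * V.det) ^ (-(1 : ℝ) / 2) * exp (2 * c * euclNorm μ ^ 2) *
          exp (-(4 * matOpNorm V)⁻¹ * euclNorm (x - m) ^ 2) :=
        integral_mono_of_nonneg
          (.of_forall fun x => mul_nonneg (exp_nonneg _) (gaussDensity_nonneg hV.det_pos.le x))
          ((integrable_exp_neg_mul_euclNorm_sub_sq hb m).const_mul _)
          (.of_forall (exp_mul_gaussDensity_le hV ha hc.le hca hm))
    _ = ((2 * π) ^ d * V.det) ^ (-(1 : ℝ) / 2) * (4 * matOpNorm V * π) ^ ((d : ℝ) / 2) *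
          exp (2 * c * euclNorm μ ^ 2) := by
        rw [integral_const_mul, integral_exp_neg_mul_euclNorm_sub_sq hb, div_inv_eq_mul,
          mul_comm π, mul_right_comm]
    _ = _ := by rw [two_pi_pow_mul_rpow_neg_half_mul_rpow_half ha hV.det_pos]

theorem stmt1 (d : ℕ) (hd : 0 < d) (μ : Fin d → ℝ) (V : Matrix (Fin d) (Fin d) ℝ)
    (hV : V.PosDef) (c : ℝ) (hc : 0 < c) (hc' : c ≤ 1 / (4 * matOpNorm V)) :
    ∫ x : Fin d → ℝ, Real.exp (c * euclNorm x ^ 2) * gaussDensity μ V x ≤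
      (2 * matOpNorm V) ^ ((d : ℝ) / 2) * V.det ^ (-(1 : ℝ) / 2) *
        Real.exp (2 * c * euclNorm μ ^ 2) :=
  stmt1_general d μ V hV c hc hc'
end

section
/- Let (ν, σ, z) ∈ (0, ∞)³, c ∈ (0, ∞), and let (x, α) ∈ ℝ² be such that x/α > 0. Then for every a ∈ [0, 1]: exp(−c(1 − a)x/(2α)) · (νσ² + a²z²)^{−(ν+1)/2} ≤ max( exp(−c x/(2α) + (ν+1)/2) · (νσ²)^{−(ν+1)/2}, (νσ² + z²)^{−(ν+1)/2} ). -/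
/-- Key elementary lemma: for `a ∈ [0,1]` and `w ≥ 0`,
`a * log (1+w) ≤ (1-a) + log (1 + a^2 * w)`. -/
lemma key_log_ineq (a w : ℝ) (ha0 : 0 ≤ a) (ha1 : a ≤ 1) (hw : 0 ≤ w) :
    a * Real.log (1 + w) ≤ (1 - a) + Real.log (1 + a ^ 2 * w) := by
  set s : ℝ := Real.sqrt (1 + w) with hs
  have hs1 : 1 ≤ s := by
    have h := Real.sqrt_le_sqrt (show (1:ℝ) ≤ 1 + w by linarith)
    rwa [Real.sqrt_one] at h
  have hs0 : 0 < s := by linarith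
  have hssq : s ^ 2 = 1 + w := Real.sq_sqrt (by linarith)
  -- Step 1 : s ^ a ≤ 1 + a * (s - 1)  (Bernoulli)
  have hbern : s ^ (a : ℝ) ≤ 1 + a * (s - 1) := by
    have := rpow_one_add_le_one_add_mul_self (s := s - 1) (by linarith) ha0 ha1
    simpa using this
  have hpos1 : (0 : ℝ) < 1 + a * (s - 1) := by nlinarith
  have hstep1 : a * Real.log s ≤ Real.log (1 + a * (s - 1)) := by
    have := Real.log_le_log (Real.rpow_pos_of_pos hs0 a) hbern
    rwa [Real.log_rpow hs0] at this
  -- Step 2 : 2 * log (1 + a*(s-1)) ≤ (1-a) + log (1 + a^2*(s^2-1))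
  have hpos2 : (0 : ℝ) < 1 + a ^ 2 * (s ^ 2 - 1) := by nlinarith
  have hstep2 : 2 * Real.log (1 + a * (s - 1)) ≤
      (1 - a) + Real.log (1 + a ^ 2 * (s ^ 2 - 1)) := by
    -- exponentiate: (1 + a*(s-1))^2 ≤ exp (1-a) * (1 + a^2*(s^2-1))
    have hexp : (1 : ℝ) + (1 - a) ≤ Real.exp (1 - a) := by linarith [Real.add_one_le_exp (1 - a)]
    have hpoly : (1 + a * (s - 1)) ^ 2 ≤ (1 + (1 - a)) * (1 + a ^ 2 * (s ^ 2 - 1)) := by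
      nlinarith [sq_nonneg (1 - a * (s - 1)), mul_nonneg ha0 (sub_nonneg.2 hs1),
        mul_nonneg (mul_nonneg ha0 ha0) (sub_nonneg.2 hs1), sq_nonneg (s - 1)]
    have h2 : (1 + a * (s - 1)) ^ 2 ≤ Real.exp (1 - a) * (1 + a ^ 2 * (s ^ 2 - 1)) := by
      calc (1 + a * (s - 1)) ^ 2 ≤ (1 + (1 - a)) * (1 + a ^ 2 * (s ^ 2 - 1)) := hpoly
        _ ≤ Real.exp (1 - a) * (1 + a ^ 2 * (s ^ 2 - 1)) := by
            apply mul_le_mul_of_nonneg_right hexp hpos2.le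
    have := Real.log_le_log (by positivity) h2
    rwa [Real.log_pow, Real.log_mul (Real.exp_pos _).ne' hpos2.ne', Real.log_exp,
      Nat.cast_ofNat] at this
  have hlogw : Real.log (1 + w) = 2 * Real.log s := by
    rw [← hssq, Real.log_pow]; push_cast; ring
  have hfin : 1 + a ^ 2 * (s ^ 2 - 1) = 1 + a ^ 2 * w := by rw [hssq]; ring
  rw [hlogw]
  calc a * (2 * Real.log s) = 2 * (a * Real.log s) := by ring
    _ ≤ 2 * Real.log (1 + a * (s - 1)) := by linarith
    _ ≤ (1 - a) + Real.log (1 + a ^ 2 * (s ^ 2 - 1)) := hstep2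
    _ = (1 - a) + Real.log (1 + a ^ 2 * w) := by rw [hfin]

theorem stmt4 (ν σ z : ℝ) (hν : 0 < ν) (hσ : 0 < σ) (hz : 0 < z) (c : ℝ) (hc : 0 < c)
    (x α : ℝ) (hxα : 0 < x / α) (a : ℝ) (ha : a ∈ Set.Icc (0 : ℝ) 1) :
    Real.exp (-c * (1 - a) * x / (2 * α)) * (ν * σ ^ 2 + a ^ 2 * z ^ 2) ^ (-(ν + 1) / 2) ≤
      max (Real.exp (-c * x / (2 * α) + (ν + 1) / 2) * (ν * σ ^ 2) ^ (-(ν + 1) / 2))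
        ((ν * σ ^ 2 + z ^ 2) ^ (-(ν + 1) / 2)) := by
  obtain ⟨ha0, ha1⟩ := ha
  set A : ℝ := ν * σ ^ 2 with hAdef
  have hA : 0 < A := by positivity
  set t : ℝ := c * x / (2 * α) with htdef
  have ht : 0 < t := by
    have : t = (c / 2) * (x / α) := by rw [htdef]; rw [div_mul_div_comm]
    rw [this]; exact mul_pos (by linarith) hxα
  set p : ℝ := (ν + 1) / 2 with hpdef
  have hp : 0 < p := by positivity
  have hAu : 0 < A + a ^ 2 * z ^ 2 := by positivity
  have hAw : 0 < A + z ^ 2 := by positivity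
  set Lu : ℝ := Real.log (1 + a ^ 2 * z ^ 2 / A) with hLudef
  set Lw : ℝ := Real.log (1 + z ^ 2 / A) with hLwdef
  have hLu0 : 0 ≤ Lu := Real.log_nonneg (le_add_of_nonneg_right (by positivity))
  have hlogu : Real.log (A + a ^ 2 * z ^ 2) = Real.log A + Lu := by
    have h1 : A + a ^ 2 * z ^ 2 = A * (1 + a ^ 2 * z ^ 2 / A) := by
      field_simp
    rw [h1, Real.log_mul hA.ne' (by positivity : (0:ℝ) < 1 + a ^ 2 * z ^ 2 / A).ne']
  have hlogw : Real.log (A + z ^ 2) = Real.log A + Lw := by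
    have h1 : A + z ^ 2 = A * (1 + z ^ 2 / A) := by field_simp
    rw [h1, Real.log_mul hA.ne' (by positivity : (0:ℝ) < 1 + z ^ 2 / A).ne']
  -- rewrite everything as exponentials
  have e0 : Real.exp (-c * (1 - a) * x / (2 * α)) * (A + a ^ 2 * z ^ 2) ^ (-(ν + 1) / 2)
      = Real.exp (-(1 - a) * t + Real.log (A + a ^ 2 * z ^ 2) * (-p)) := by
    rw [Real.rpow_def_of_pos hAu, ← Real.exp_add]
    congr 1
    rw [htdef, hpdef]; ring
  have e1 : Real.exp (-c * x / (2 * α) + (ν + 1) / 2) * A ^ (-(ν + 1) / 2)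
      = Real.exp (-t + p + Real.log A * (-p)) := by
    rw [Real.rpow_def_of_pos hA, ← Real.exp_add]
    congr 1
    rw [htdef, hpdef]; ring
  have e2 : (A + z ^ 2) ^ (-(ν + 1) / 2) = Real.exp (Real.log (A + z ^ 2) * (-p)) := by
    rw [Real.rpow_def_of_pos hAw]
    congr 1
    rw [hpdef]; ring
  rw [e0, e1, e2]
  by_cases h : a * t ≤ p * (1 + Lu)
  · -- bounded by the first term
    apply le_max_of_le_left
    rw [Real.exp_le_exp]
    have hLu' : Real.log (A + a ^ 2 * z ^ 2) = Real.log A + Lu := hlogu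
    rw [hLu']
    nlinarith [mul_nonneg hp.le hLu0]
  · -- bounded by the second term
    push_neg at h
    apply le_max_of_le_right
    rw [Real.exp_le_exp]
    rw [hlogu, hlogw]
    -- goal reduces to:  p * (Lw - Lu) ≤ (1 - a) * t
    have ha0' : 0 < a := by
      by_contra hcon
      push_neg at hcon
      nlinarith [mul_nonneg (neg_nonneg.2 hcon) ht.le, mul_nonneg hp.le hLu0]
    have hF : a * Lw ≤ (1 - a) + Lu := by
      have := key_log_ineq a (z ^ 2 / A) ha0'.le ha1 (by positivity)
      rw [hLwdef, hLudef]
      have harg : a ^ 2 * z ^ 2 / A = a ^ 2 * (z ^ 2 / A) := by ring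
      rw [harg]
      exact this
    have h1 : 0 ≤ (1 - a) * (a * t - p - p * Lu) := by
      apply mul_nonneg (by linarith)
      nlinarith
    have h2 : 0 ≤ p * ((1 - a) + Lu - a * Lw) := by
      apply mul_nonneg hp.le (by linarith)
    have h3 : 0 ≤ a * ((1 - a) * t - p * (Lw - Lu)) := by
      have hid : a * ((1 - a) * t - p * (Lw - Lu)) =
          (1 - a) * (a * t - p - p * Lu) + p * ((1 - a) + Lu - a * Lw) := by ring
      rw [hid]; linarith
    have hG : 0 ≤ (1 - a) * t - p * (Lw - Lu) :=
      le_of_mul_le_mul_left (by linarith) ha0'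
    linarith
end

section
/- Let (ν, σ, μ) ∈ (0, ∞)³, a ∈ [0, 1], and (x, α, w) ∈ ℝ³ be such that one of the following three conditions holds: (1) x/α > 0; (2) x/α < 0 and μ ≥ 1; (3) x/α < 0, μ < 1 and, for some ε ∈ (0, 1), |x| ≥ 2|α|/(εμ) and a ∈ [0, 1 − ε]. Then exp(−(1 − a)x/(2α) − (1/2)·μ^{1−a}·e^{−(1−a)x/α}) · (νσ² + a²(x − αw)²)^{−(ν+1)/2} ≤ max( exp(−|x|/(4|α|) + (ν+1)/2) · (νσ²)^{−(ν+1)/2}, (νσ² + (x − αw)²)^{−(ν+1)/2} ). -/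
/-!
Put `s = -(1 - a) x / α`. The exponent equals `s / 2 - μ^(1-a) e^s / 2`, and each of the three
conditions guarantees `2 s ≤ μ^(1-a) e^s` whenever `s > 0`, so the exponent is at most
`-|s| / 2 = -(1 - a) t / 2` with `t = |x| / |α|`. If `(2a - 1) t ≤ 2(ν + 1)` this is below
`-t / 4 + (ν + 1) / 2`, and dropping `a² D`, `D = (x - α w)²`, gives the first term of the maximum.
Otherwise `a > 1/2` and `log a ≥ 1 - 1/a` yields `e^{-(1-a) t / 2} ≤ a^{ν+1}`, which exactly
compensates `νσ² + a² D ≥ a² (νσ² + D)`, giving the second term.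
-/

open Real

lemma two_mul_le_exp (u : ℝ) : 2 * u ≤ exp u := by
  rcases le_total u 1 with h | h
  · nlinarith [add_one_le_exp u]
  · have h2 : exp u = exp (u - 1) * exp 1 := by rw [← exp_add, sub_add_cancel]
    nlinarith [add_one_le_exp (u - 1), exp_one_gt_d9, exp_pos (u - 1)]

lemma sq_le_exp_of_nonneg {u : ℝ} (hu : 0 ≤ u) : u ^ 2 ≤ exp u := by
  have h : u ≤ exp (u / 2) := by linarith [two_mul_le_exp (u / 2)]
  calc u ^ 2 ≤ exp (u / 2) ^ 2 := pow_le_pow_left₀ hu h 2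
    _ = exp u := by rw [← exp_nat_mul]; ring_nf

lemma two_mul_le_mul_exp_of_one_le {m : ℝ} (hm : 1 ≤ m) (s : ℝ) : 2 * s ≤ m * exp s := by
  nlinarith [two_mul_le_exp s, exp_pos s]

lemma two_mul_le_mul_exp_of_two_le_mul {m s : ℝ} (hm : 0 ≤ m) (h : 2 ≤ m * s) :
    2 * s ≤ m * exp s := by
  have hs : 0 ≤ s := by
    by_contra! hs
    nlinarith [mul_nonpos_of_nonneg_of_nonpos hm hs.le]
  nlinarith [sq_le_exp_of_nonneg hs, mul_le_mul_of_nonneg_left (sq_le_exp_of_nonneg hs) hm]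

lemma half_sub_half_mul_exp_le {m s : ℝ} (hm : 0 ≤ m) (h : 0 < s → 2 * s ≤ m * exp s) :
    s / 2 - m / 2 * exp s ≤ -|s| / 2 := by
  rcases le_or_gt s 0 with hs | hs
  · rw [abs_of_nonpos hs]
    nlinarith [mul_nonneg hm (exp_pos s).le]
  · rw [abs_of_pos hs]
    linarith [h hs]

lemma exp_neg_one_sub_mul_le_rpow {a c s : ℝ} (ha0 : 0 < a) (ha1 : a ≤ 1) (hc : 0 ≤ c)
    (hcs : c ≤ a * s) : exp (-((1 - a) * s)) ≤ a ^ c := by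
  rw [rpow_def_of_pos ha0, exp_le_exp]
  have hlog : (1 - a⁻¹) * c ≤ log a * c :=
    mul_le_mul_of_nonneg_right (one_sub_inv_le_log_of_pos ha0) hc
  have hinv : (1 - a⁻¹) * c = -((1 - a) * (c / a)) := by field_simp; ring
  have hdiv : c / a ≤ s := by rwa [div_le_iff₀ ha0, mul_comm]
  nlinarith [mul_le_mul_of_nonneg_left hdiv (sub_nonneg.2 ha1)]

section StudentFactor

variable {a t k B D : ℝ}

lemma exp_mul_rpow_le_of_le (hB : 0 < B) (hD : 0 ≤ D) (hk : 0 ≤ k)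
    (h : (2 * a - 1) * t ≤ 4 * k) :
    exp (-((1 - a) * t) / 2) * (B + a ^ 2 * D) ^ (-k) ≤ exp (-t / 4 + k) * B ^ (-k) := by
  apply mul_le_mul (exp_le_exp.2 (by linarith)) _ (by positivity) (exp_pos _).le
  exact rpow_le_rpow_of_nonpos hB (by nlinarith [sq_nonneg a]) (by linarith)

lemma exp_mul_rpow_le_of_lt (hB : 0 < B) (hD : 0 ≤ D) (hk : 0 ≤ k) (ha1 : a ≤ 1)
    (ht : 0 ≤ t) (h : 4 * k < (2 * a - 1) * t) :
    exp (-((1 - a) * t) / 2) * (B + a ^ 2 * D) ^ (-k) ≤ (B + D) ^ (-k) := by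
  have ha0 : 0 < a := by nlinarith
  have ha2 : 0 < a ^ 2 := by positivity
  have hexp : exp (-((1 - a) * t) / 2) ≤ (a ^ 2) ^ k := by
    rw [show -((1 - a) * t) / 2 = -((1 - a) * (t / 2)) by ring, ← rpow_natCast_mul ha0.le]
    exact exp_neg_one_sub_mul_le_rpow ha0 ha1 (by positivity) (by push_cast; nlinarith)
  have hbase : (B + a ^ 2 * D) ^ (-k) ≤ (a ^ 2) ^ (-k) * (B + D) ^ (-k) := by
    rw [← mul_rpow ha2.le (by positivity)]
    have ha2le : a ^ 2 ≤ 1 := by nlinarith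
    exact rpow_le_rpow_of_nonpos (by positivity)
      (by nlinarith [mul_le_mul_of_nonneg_right ha2le hB.le]) (by linarith)
  calc exp (-((1 - a) * t) / 2) * (B + a ^ 2 * D) ^ (-k)
      ≤ (a ^ 2) ^ k * ((a ^ 2) ^ (-k) * (B + D) ^ (-k)) :=
        mul_le_mul hexp hbase (by positivity) (by positivity)
    _ = (B + D) ^ (-k) := by
        rw [rpow_neg ha2.le, ← mul_assoc, mul_inv_cancel₀ (by positivity), one_mul]

lemma exp_mul_rpow_le_max (hB : 0 < B) (hD : 0 ≤ D) (hk : 0 ≤ k) (ha1 : a ≤ 1)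
    (ht : 0 ≤ t) :
    exp (-((1 - a) * t) / 2) * (B + a ^ 2 * D) ^ (-k) ≤
      max (exp (-t / 4 + k) * B ^ (-k)) ((B + D) ^ (-k)) := by
  rcases le_or_gt ((2 * a - 1) * t) (4 * k) with h | h
  · exact le_max_of_le_left (exp_mul_rpow_le_of_le hB hD hk h)
  · exact le_max_of_le_right (exp_mul_rpow_le_of_lt hB hD hk ha1 ht h)

end StudentFactor

lemma exponent_le_of_cases {μ a x α : ℝ} (hμ : 0 < μ) (ha0 : 0 ≤ a) (ha1 : a ≤ 1)
    (hcase : 0 < x / α ∨ (x / α < 0 ∧ 1 ≤ μ) ∨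
      (x / α < 0 ∧ μ < 1 ∧ ∃ ε ∈ Set.Ioo (0 : ℝ) 1,
        2 * |α| / (ε * μ) ≤ |x| ∧ a ∈ Set.Icc (0 : ℝ) (1 - ε))) :
    -((1 - a) * x) / (2 * α) - (1 / 2) * μ ^ (1 - a) * exp (-((1 - a) * x) / α) ≤
      -((1 - a) * (|x| / |α|)) / 2 := by
  have hα : α ≠ 0 := by
    rintro rfl
    simp only [div_zero, lt_irrefl, false_and, false_or] at hcase
  set s := -((1 - a) * (x / α)) with hs_def
  have hexponent : -((1 - a) * x) / (2 * α) - (1 / 2) * μ ^ (1 - a) * exp (-((1 - a) * x) / α)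
      = s / 2 - μ ^ (1 - a) / 2 * exp s := by
    rw [hs_def]; field_simp
  have habs : (1 - a) * (|x| / |α|) = |s| := by
    rw [abs_neg, abs_mul, abs_of_nonneg (sub_nonneg.2 ha1), abs_div]
  rw [hexponent, habs]
  refine half_sub_half_mul_exp_le (by positivity) fun hs => ?_
  rcases hcase with hr | ⟨-, hμ1⟩ | ⟨-, hμ1, ε, ⟨hε0, -⟩, hx, -, haε⟩
  · nlinarith [mul_nonneg (sub_nonneg.2 ha1) hr.le]
  · exact two_mul_le_mul_exp_of_one_le (one_le_rpow hμ1 (by linarith)) s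
  · have hαpos : 0 < |α| := abs_pos.2 hα
    have hlarge : 2 ≤ μ * (ε * (|x| / |α|)) := by
      rw [div_le_iff₀ (by positivity)] at hx
      rw [show μ * (ε * (|x| / |α|)) = |x| * (ε * μ) / |α| by ring, le_div_iff₀ hαpos]
      exact hx
    have hμle : μ ≤ μ ^ (1 - a) := by
      simpa using rpow_le_rpow_of_exponent_ge hμ hμ1.le (by linarith : 1 - a ≤ 1)
    have hεs : ε * (|x| / |α|) ≤ s := by
      rw [← abs_of_pos hs, ← habs]
      exact mul_le_mul_of_nonneg_right (by linarith) (by positivity)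
    refine two_mul_le_mul_exp_of_two_le_mul (by positivity) ?_
    calc 2 ≤ μ * (ε * (|x| / |α|)) := hlarge
      _ ≤ μ ^ (1 - a) * s := mul_le_mul hμle hεs (by positivity) (by positivity)

theorem stmt5 (ν σ μ : ℝ) (hν : 0 < ν) (hσ : 0 < σ) (hμ : 0 < μ)
    (a : ℝ) (ha : a ∈ Set.Icc (0 : ℝ) 1) (x α w : ℝ)
    (hcase : 0 < x / α ∨ (x / α < 0 ∧ 1 ≤ μ) ∨
      (x / α < 0 ∧ μ < 1 ∧ ∃ ε ∈ Set.Ioo (0 : ℝ) 1,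
        2 * |α| / (ε * μ) ≤ |x| ∧ a ∈ Set.Icc (0 : ℝ) (1 - ε))) :
    Real.exp (-((1 - a) * x) / (2 * α) -
        (1 / 2) * μ ^ (1 - a) * Real.exp (-((1 - a) * x) / α)) *
        (ν * σ ^ 2 + a ^ 2 * (x - α * w) ^ 2) ^ (-(ν + 1) / 2) ≤
      max (Real.exp (-|x| / (4 * |α|) + (ν + 1) / 2) * (ν * σ ^ 2) ^ (-(ν + 1) / 2))
        ((ν * σ ^ 2 + (x - α * w) ^ 2) ^ (-(ν + 1) / 2)) := by
  obtain ⟨ha0, ha1⟩ := ha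
  have hE := exponent_le_of_cases hμ ha0 ha1 hcase
  rw [neg_div _ (ν + 1), show -|x| / (4 * |α|) = -(|x| / |α|) / 4 by ring]
  calc _ ≤ exp (-((1 - a) * (|x| / |α|)) / 2) *
        (ν * σ ^ 2 + a ^ 2 * (x - α * w) ^ 2) ^ (-((ν + 1) / 2)) :=
        mul_le_mul_of_nonneg_right (exp_le_exp.2 hE) (by positivity)
    _ ≤ _ := exp_mul_rpow_le_max (by positivity) (sq_nonneg _) (by positivity) ha1 (by positivity)
end

section
/- Let (δ_t)_{t≥1} be a non-increasing sequence in [0, ∞) with lim_{t→∞} t·δ_t = 0. Then there exists a sequence (k_t)_{t≥1} of positive integers such that lim_{t→∞} k_t = ∞, lim_{t→∞} k_t/t = 0 and lim_{t→∞} t·δ_{k_t} = 0. -/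
open Filter

theorem stmt16 (δ : ℕ → ℝ) (hpos : ∀ t, 0 ≤ δ t) (hmono : Antitone δ)
    (hlim : Tendsto (fun t : ℕ => (t : ℝ) * δ t) atTop (nhds 0)) :
    ∃ k : ℕ → ℕ, (∀ t, 0 < k t) ∧ Tendsto k atTop atTop ∧
      Tendsto (fun t : ℕ => (k t : ℝ) / (t : ℝ)) atTop (nhds 0) ∧
      Tendsto (fun t : ℕ => (t : ℝ) * δ (k t)) atTop (nhds 0) := by
  set ε : ℕ → ℝ := fun t => (t : ℝ) * δ t with hεdef
  have hεpos : ∀ t, 0 ≤ ε t := fun t => mul_nonneg (Nat.cast_nonneg t) (hpos t)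
  have hbdd : BddAbove (Set.range ε) := hlim.bddAbove_range
  have hbdd' : ∀ m : ℕ, BddAbove (Set.range fun j : ℕ => ε (m + j)) := by
    intro m
    exact hbdd.mono (Set.range_comp_subset_range (fun j => m + j) ε)
  set a : ℕ → ℝ := fun m => ⨆ j : ℕ, ε (m + j) with hadef
  have hεa : ∀ m j : ℕ, m ≤ j → ε j ≤ a m := by
    intro m j hmj
    have := le_ciSup (hbdd' m) (j - m)
    rwa [Nat.add_sub_cancel' hmj] at this
  have ha0 : ∀ m, 0 ≤ a m := fun m => (hεpos m).trans (hεa m m le_rfl)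
  have hatend : Tendsto a atTop (nhds 0) := by
    rw [Metric.tendsto_atTop]
    intro η hη
    rw [Metric.tendsto_atTop] at hlim
    obtain ⟨N, hN⟩ := hlim (η / 2) (by linarith)
    refine ⟨N, fun m hm => ?_⟩
    have hub : a m ≤ η / 2 := by
      refine ciSup_le fun j => ?_
      have := hN (m + j) (by omega)
      rw [Real.dist_eq, sub_zero] at this
      exact (le_abs_self _).trans this.le
    rw [Real.dist_eq, sub_zero, abs_of_nonneg (ha0 m)]
    linarith
  have hsq : Tendsto (fun t : ℕ => Real.sqrt (t : ℝ)) atTop atTop := by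
    refine tendsto_atTop_atTop.2 fun b => ⟨⌈b * b⌉₊, fun t ht => ?_⟩
    have h1 : b * b ≤ (t : ℝ) := (Nat.le_ceil _).trans (Nat.cast_le.2 ht)
    calc b ≤ |b| := le_abs_self b
      _ = Real.sqrt (b ^ 2) := (Real.sqrt_sq_eq_abs b).symm
      _ ≤ Real.sqrt t := Real.sqrt_le_sqrt (by nlinarith)
  have hstend : Tendsto (fun t : ℕ => Nat.sqrt t + 1) atTop atTop := by
    refine tendsto_atTop_atTop.2 fun b => ⟨b * b, fun t ht => ?_⟩
    have : Nat.sqrt (b * b) ≤ Nat.sqrt t := Nat.sqrt_le_sqrt ht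
    rw [Nat.sqrt_eq b] at this
    omega
  have hAsqrt : Tendsto (fun t : ℕ => Real.sqrt (a (Nat.sqrt t + 1))) atTop (nhds 0) := by
    have := (hatend.comp hstend).sqrt
    rwa [Real.sqrt_zero] at this
  refine ⟨fun t => max (Nat.sqrt t + 1) ⌈(t : ℝ) * Real.sqrt (a (Nat.sqrt t + 1))⌉₊,
    fun t => lt_of_lt_of_le (Nat.succ_pos _) (le_max_left _ _), ?_, ?_, ?_⟩
  · -- k → ∞
    exact tendsto_atTop_mono (fun t => le_max_left _ _) hstend
  · -- k t / t → 0
    have h3sqrt : Tendsto (fun t : ℕ => 3 / Real.sqrt (t : ℝ)) atTop (nhds 0) :=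
      tendsto_const_nhds.div_atTop hsq
    refine squeeze_zero' ?_ ?_ (by simpa using h3sqrt.add hAsqrt)
    · filter_upwards with t
      positivity
    · filter_upwards [eventually_ge_atTop 1] with t ht
      set A := a (Nat.sqrt t + 1) with hA
      have htR : (1 : ℝ) ≤ (t : ℝ) := by exact_mod_cast ht
      have htpos : (0 : ℝ) < t := by linarith
      have hsqrt1 : (1 : ℝ) ≤ Real.sqrt t := by
        rw [show (1:ℝ) = Real.sqrt 1 by simp]
        exact Real.sqrt_le_sqrt htR
      have hns : ((Nat.sqrt t : ℕ) : ℝ) ≤ Real.sqrt t := Real.nat_sqrt_le_real_sqrt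
      have hA0 : 0 ≤ A := ha0 _
      have hsA0 : 0 ≤ Real.sqrt A := Real.sqrt_nonneg _
      have hkle : ((max (Nat.sqrt t + 1) ⌈(t : ℝ) * Real.sqrt A⌉₊ : ℕ) : ℝ) ≤
          ((Nat.sqrt t : ℕ) : ℝ) + 1 + ((t : ℝ) * Real.sqrt A + 1) := by
        rw [Nat.cast_max]
        refine max_le (by push_cast; nlinarith [mul_nonneg htpos.le hsA0]) ?_
        have := Nat.ceil_lt_add_one (mul_nonneg htpos.le hsA0)
        linarith
      rw [div_le_iff₀ htpos]
      have hsqsq : Real.sqrt t * Real.sqrt t = (t : ℝ) := Real.mul_self_sqrt htpos.le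
      calc ((max (Nat.sqrt t + 1) ⌈(t : ℝ) * Real.sqrt A⌉₊ : ℕ) : ℝ)
          ≤ ((Nat.sqrt t : ℕ) : ℝ) + 1 + ((t : ℝ) * Real.sqrt A + 1) := hkle
        _ ≤ 3 * Real.sqrt t + (t : ℝ) * Real.sqrt A := by nlinarith
        _ = (3 / Real.sqrt t + Real.sqrt A) * t := by
            field_simp
            nlinarith
  · -- t * δ (k t) → 0
    refine squeeze_zero' ?_ ?_ hAsqrt
    · filter_upwards with t
      exact mul_nonneg (Nat.cast_nonneg t) (hpos _)
    · filter_upwards [eventually_ge_atTop 1] with t ht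
      set A := a (Nat.sqrt t + 1) with hA
      set K := max (Nat.sqrt t + 1) ⌈(t : ℝ) * Real.sqrt A⌉₊ with hK
      have htR : (1 : ℝ) ≤ (t : ℝ) := by exact_mod_cast ht
      have hA0 : 0 ≤ A := ha0 _
      have hK1 : Nat.sqrt t + 1 ≤ K := le_max_left _ _
      have hKε : (K : ℝ) * δ K ≤ A := hεa _ K hK1
      have hKc : (t : ℝ) * Real.sqrt A ≤ (K : ℝ) :=
        (Nat.le_ceil _).trans (Nat.cast_le.2 (le_max_right _ _))
      have hKpos : (1 : ℝ) ≤ (K : ℝ) := by exact_mod_cast Nat.one_le_iff_ne_zero.2 (by omega)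
      by_cases hAz : A = 0
      · have hδK : δ K = 0 := by
          have h1 : (K : ℝ) * δ K ≤ 0 := by rw [hAz] at hKε; exact hKε
          nlinarith [hpos K]
        rw [hδK, mul_zero]
        exact Real.sqrt_nonneg _
      · have hApos : 0 < A := lt_of_le_of_ne hA0 (Ne.symm hAz)
        have hsApos : 0 < Real.sqrt A := Real.sqrt_pos.2 hApos
        have hsq2 : Real.sqrt A * Real.sqrt A = A := Real.mul_self_sqrt hA0
        have h1 : (t : ℝ) * Real.sqrt A * δ K ≤ (K : ℝ) * δ K :=
          mul_le_mul_of_nonneg_right hKc (hpos K)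
        nlinarith [hpos K]
end
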